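/- Let g : ℝ × ℝⁿ → (symmetric positive-semidefinite continuous bilinear forms on ℝⁿ) be continuous and C¹ in the time variable, and let r > 0. Assume that (∂_t g)(t, x)(w, w) ≤ 0 for every t ≥ 0, every x in the closed ball of radius r about 0, and every w ∈ ℝⁿ. Define the instantwise distance d_t(x,y) := inf over C¹ curves c : [0,1] → ℝⁿ with c 0 = x and c 1 = y of ∫₀¹ √(g(t, c τ)(c' τ, c' τ)) dτ. Then: (i) for every u with ‖u‖ ≤ r and every t ≥ 0, d_t(0, u) ≤ √(∫₀¹ g(0, τ • u)(u, u) dτ); and (ii) for every ε > 0 there exists δ > 0 such that ‖u‖ < δ implies d_t(0, u) < ε for all t ≥ 0. In particular the constant solution 0 is Lyapunov stable with respect to the instantwise distance induced by g. -/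

import Mathlib

open Function intervalIntegral

variable {E : Type*} [NormedAddCommGroup E] [InnerProductSpace ℝ E]
  [FiniteDimensional ℝ E]

/-- The instantwise distance at time `t` between `x` and `y` determined by a
time-dependent metric `g`: the infimum of the `g(t)`-lengths of C¹ curves
from `x` to `y`. -/
noncomputable def instDist (g : ℝ → E → (E →L[ℝ] E →L[ℝ] ℝ))
    (t : ℝ) (x y : E) : ℝ :=
  sInf {L : ℝ | ∃ c : ℝ → E, ContDiff ℝ 1 c ∧ c 0 = x ∧ c 1 = y ∧
    L = ∫ τ in (0:ℝ)..1, Real.sqrt (g t (c τ) (deriv c τ) (deriv c τ))}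
/-! The segment `τ ↦ τ • u` is an admissible curve, so `d_t(0, u)` is at most its `g(t)`-length.
Since `∂ₜ g ≤ 0`, that length is at most its `g(0)`-length, and by Jensen's inequality for the
concave `√` the latter is at most the square root of the `g(0)`-energy of the segment. A
compactness bound `‖g(0, x)‖ ≤ C` on the ball makes this energy at most `C ‖u‖²`, whence
`d_t(0, u) ≤ √C ‖u‖` uniformly in `t ≥ 0`. -/

open Topology

theorem integral_sqrt_le_sqrt_integral {h : ℝ → ℝ} (hc : ContinuousOn h (Set.Icc 0 1))
    (hpos : ∀ τ ∈ Set.Icc (0 : ℝ) 1, 0 ≤ h τ) :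
    ∫ τ in (0 : ℝ)..1, √(h τ) ≤ √(∫ τ in (0 : ℝ)..1, h τ) := by
  have : MeasureTheory.IsProbabilityMeasure (MeasureTheory.volume.restrict (Set.Ioc (0 : ℝ) 1)) :=
    ⟨by simp⟩
  have hint : MeasureTheory.IntegrableOn h (Set.Ioc 0 1) :=
    hc.integrableOn_Icc.mono_set Set.Ioc_subset_Icc_self
  have hint_sqrt : MeasureTheory.IntegrableOn (fun τ => √(h τ)) (Set.Ioc 0 1) :=
    (Real.continuous_sqrt.comp_continuousOn hc).integrableOn_Icc.mono_set Set.Ioc_subset_Icc_self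
  rw [integral_of_le zero_le_one, integral_of_le zero_le_one]
  exact Real.strictConcaveOn_sqrt.concaveOn.le_map_integral Real.continuous_sqrt.continuousOn
    isClosed_Ici (MeasureTheory.ae_restrict_of_forall_mem measurableSet_Ioc
      fun τ hτ => hpos τ (Set.Ioc_subset_Icc_self hτ)) hint hint_sqrt

theorem antitoneOn_apply_apply_of_deriv_nonpos {F : Type*} [NormedAddCommGroup F]
    [NormedSpace ℝ F] {f : ℝ → F →L[ℝ] F →L[ℝ] ℝ} (hf : Differentiable ℝ f) (w : F)
    (hneg : ∀ t, 0 ≤ t → deriv f t w w ≤ 0) :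
    AntitoneOn (fun t => f t w w) (Set.Ici 0) := by
  have hderiv : ∀ t, HasDerivAt (fun t => f t w w) (deriv f t w w) t := fun t => by
    have hft := DifferentiableAt.hasDerivAt (𝕜 := ℝ) (F := F →L[ℝ] F →L[ℝ] ℝ) (hf t)
    exact ((ContinuousLinearMap.apply ℝ ℝ w).comp
      (ContinuousLinearMap.apply ℝ (F →L[ℝ] ℝ) w)).hasFDerivAt.comp_hasDerivAt t hft
  refine antitoneOn_of_deriv_nonpos (convex_Ici 0)
    (fun t _ => (hderiv t).continuousAt.continuousWithinAt)
    (fun t _ => (hderiv t).differentiableAt.differentiableWithinAt) fun t ht => ?_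
  rw [(hderiv t).deriv]
  exact hneg t (interior_Ici (a := (0 : ℝ)) ▸ ht).le

theorem norm_smul_le_of_mem_Icc {F : Type*} [NormedAddCommGroup F] [NormedSpace ℝ F]
    {τ : ℝ} (hτ : τ ∈ Set.Icc (0 : ℝ) 1) (u : F) : ‖τ • u‖ ≤ ‖u‖ := by
  rw [norm_smul, Real.norm_of_nonneg hτ.1]
  exact mul_le_of_le_one_left (norm_nonneg u) hτ.2

theorem integral_apply_smul_le {F : Type*} [NormedAddCommGroup F] [NormedSpace ℝ F]
    (B : F → F →L[ℝ] F →L[ℝ] ℝ) {C r : ℝ} (hB : ∀ x, ‖x‖ ≤ r → ‖B x‖ ≤ C) {u : F}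
    (hu : ‖u‖ ≤ r) :
    ∫ τ in (0 : ℝ)..1, B (τ • u) u u ≤ C * ‖u‖ ^ 2 := by
  have hpt : ∀ τ ∈ Set.uIoc (0 : ℝ) 1, ‖B (τ • u) u u‖ ≤ C * ‖u‖ ^ 2 := fun τ hτ => by
    rw [Set.uIoc_of_le zero_le_one] at hτ
    have hBτ := hB _ ((norm_smul_le_of_mem_Icc (Set.Ioc_subset_Icc_self hτ) u).trans hu)
    calc ‖B (τ • u) u u‖ ≤ ‖B (τ • u)‖ * ‖u‖ * ‖u‖ := (B (τ • u)).le_opNorm₂ u u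
      _ ≤ C * ‖u‖ ^ 2 := by rw [mul_assoc, ← sq]; gcongr
  calc ∫ τ in (0 : ℝ)..1, B (τ • u) u u ≤ ‖∫ τ in (0 : ℝ)..1, B (τ • u) u u‖ := le_abs_self _
    _ ≤ C * ‖u‖ ^ 2 * |1 - 0| := norm_integral_le_of_norm_le_const hpt
    _ = C * ‖u‖ ^ 2 := by norm_num

omit [FiniteDimensional ℝ E] in
theorem instDist_le_integral_segment (g : ℝ → E → (E →L[ℝ] E →L[ℝ] ℝ)) (t : ℝ) (x y : E) :
    instDist g t x y ≤ ∫ τ in (0 : ℝ)..1, √(g t (x + τ • (y - x)) (y - x) (y - x)) := by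
  have hderiv : ∀ τ : ℝ, deriv (fun τ : ℝ => x + τ • (y - x)) τ = y - x := fun τ => by
    simpa using (((hasDerivAt_id τ).smul_const (y - x)).const_add x).deriv
  refine csInf_le ⟨0, ?_⟩
    ⟨fun τ => x + τ • (y - x), by fun_prop, by simp, by simp, by simp only [hderiv]⟩
  rintro _ ⟨c, -, -, -, rfl⟩
  exact integral_nonneg zero_le_one fun τ _ => Real.sqrt_nonneg _

omit [FiniteDimensional ℝ E] in
theorem instDist_zero_le_sqrt_initial_energy (g : ℝ → E → (E →L[ℝ] E →L[ℝ] ℝ)) {r : ℝ}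
    (hg : Continuous (uncurry g)) (hgt : ∀ x : E, Differentiable ℝ (fun t => g t x))
    (hgpos : ∀ x w : E, 0 ≤ g 0 x w w)
    (hneg : ∀ t : ℝ, 0 ≤ t → ∀ x : E, ‖x‖ ≤ r → ∀ w : E,
      deriv (fun t' => g t' x) t w w ≤ 0)
    {u : E} (hu : ‖u‖ ≤ r) {t : ℝ} (ht : 0 ≤ t) :
    instDist g t 0 u ≤ √(∫ τ in (0 : ℝ)..1, g 0 (τ • u) u u) := by
  have hcont : ∀ s, Continuous fun τ : ℝ => g s (τ • u) u u := fun s =>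
    ((hg.comp (continuous_const.prodMk (continuous_id.smul continuous_const))).clm_apply
      continuous_const).clm_apply continuous_const
  have hdecay : ∀ τ ∈ Set.Icc (0 : ℝ) 1, g t (τ • u) u u ≤ g 0 (τ • u) u u := fun τ hτ =>
    antitoneOn_apply_apply_of_deriv_nonpos (hgt _) u
      (fun s hs => hneg s hs _ ((norm_smul_le_of_mem_Icc hτ u).trans hu) u)
      Set.self_mem_Ici ht ht
  calc instDist g t 0 u ≤ ∫ τ in (0 : ℝ)..1, √(g t (τ • u) u u) := by
        simpa using instDist_le_integral_segment g t 0 u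
    _ ≤ ∫ τ in (0 : ℝ)..1, √(g 0 (τ • u) u u) :=
        integral_mono_on zero_le_one ((hcont t).sqrt.intervalIntegrable 0 1)
          ((hcont 0).sqrt.intervalIntegrable 0 1) fun τ hτ => Real.sqrt_le_sqrt (hdecay τ hτ)
    _ ≤ √(∫ τ in (0 : ℝ)..1, g 0 (τ • u) u u) :=
        integral_sqrt_le_sqrt_integral (hcont 0).continuousOn fun τ _ => hgpos _ u

theorem lyapunov_stability_of_nonpositive_time_derivative_general
    (g : ℝ → E → (E →L[ℝ] E →L[ℝ] ℝ)) (r : ℝ) (hr : 0 < r)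
    (hg : Continuous (uncurry g))
    (hgt : ∀ x : E, ContDiff ℝ 1 (fun t => g t x))
    (hgpos : ∀ (t : ℝ) (x w : E), 0 ≤ g t x w w)
    (hneg : ∀ t : ℝ, 0 ≤ t → ∀ x : E, ‖x‖ ≤ r → ∀ w : E,
      deriv (fun t' => g t' x) t w w ≤ 0) :
    (∀ u : E, ‖u‖ ≤ r → ∀ t : ℝ, 0 ≤ t →
      instDist g t 0 u ≤ Real.sqrt (∫ τ in (0:ℝ)..1, g 0 (τ • u) u u)) ∧
    (∀ ε : ℝ, 0 < ε → ∃ δ : ℝ, 0 < δ ∧ ∀ u : E, ‖u‖ < δ →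
      ∀ t : ℝ, 0 ≤ t → instDist g t 0 u < ε) := by
  have hsqrt : ∀ u : E, ‖u‖ ≤ r → ∀ t : ℝ, 0 ≤ t →
      instDist g t 0 u ≤ √(∫ τ in (0 : ℝ)..1, g 0 (τ • u) u u) := fun u hu t ht =>
    instDist_zero_le_sqrt_initial_energy g hg (fun x => (hgt x).differentiable one_ne_zero)
      (hgpos 0) hneg hu ht
  refine ⟨hsqrt, fun ε hε => ?_⟩
  have hg0 : Continuous fun x => g 0 x := hg.comp (continuous_const.prodMk continuous_id)
  obtain ⟨C, hC⟩ := (isCompact_closedBall (0 : E) r).exists_bound_of_continuousOn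
    (f := fun x => g 0 x) hg0.continuousOn
  have hlin : ∀ u : E, ‖u‖ ≤ r → ∀ t : ℝ, 0 ≤ t → instDist g t 0 u ≤ √C * ‖u‖ :=
    fun u hu t ht => calc
      instDist g t 0 u ≤ √(C * ‖u‖ ^ 2) := (hsqrt u hu t ht).trans <| Real.sqrt_le_sqrt <|
        integral_apply_smul_le _ (fun x hx => hC x (by simpa using hx)) hu
      _ = √C * ‖u‖ := by rw [Real.sqrt_mul' _ (by positivity), Real.sqrt_sq (norm_nonneg u)]
  have hsmall : ∀ᶠ u in 𝓝 (0 : E), ‖u‖ ≤ r ∧ √C * ‖u‖ < ε := by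
    have hlim : Filter.Tendsto (fun u : E => √C * ‖u‖) (𝓝 0) (𝓝 0) := by
      simpa using (continuous_norm.const_mul √C).tendsto (0 : E)
    filter_upwards [Metric.closedBall_mem_nhds (0 : E) hr, hlim.eventually (gt_mem_nhds hε)]
      with u hu hCu
    exact ⟨by simpa using hu, hCu⟩
  obtain ⟨δ, hδ, hball⟩ := Metric.eventually_nhds_iff.1 hsmall
  refine ⟨δ, hδ, fun u hu t ht => ?_⟩
  have hu' := hball (show dist u 0 < δ by simpa using hu)
  exact (hlin u hu'.1 t ht).trans_lt hu'.2

/-- If `∂ₜ g ≤ 0` for `t ≥ 0` on the closed ball of radius `r`, then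
(i) the instantwise distance from `0` to any `u` with `‖u‖ ≤ r` at any
time `t ≥ 0` is bounded by the square root of the initial segment energy, and
(ii) the constant solution `0` is Lyapunov stable with respect to the
instantwise distance induced by `g`. -/
theorem lyapunov_stability_of_nonpositive_time_derivative
    (g : ℝ → E → (E →L[ℝ] E →L[ℝ] ℝ)) (r : ℝ) (hr : 0 < r)
    (hg : Continuous (uncurry g))
    (hgt : ∀ x : E, ContDiff ℝ 1 (fun t => g t x))
    (hgsym : ∀ (t : ℝ) (x u w : E), g t x u w = g t x w u)
    (hgpos : ∀ (t : ℝ) (x w : E), 0 ≤ g t x w w)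
    (hneg : ∀ t : ℝ, 0 ≤ t → ∀ x : E, ‖x‖ ≤ r → ∀ w : E,
      deriv (fun t' => g t' x) t w w ≤ 0) :
    (∀ u : E, ‖u‖ ≤ r → ∀ t : ℝ, 0 ≤ t →
      instDist g t 0 u ≤ Real.sqrt (∫ τ in (0:ℝ)..1, g 0 (τ • u) u u)) ∧
    (∀ ε : ℝ, 0 < ε → ∃ δ : ℝ, 0 < δ ∧ ∀ u : E, ‖u‖ < δ →
      ∀ t : ℝ, 0 ≤ t → instDist g t 0 u < ε) :=
  lyapunov_stability_of_nonpositive_time_derivative_general g r hr hg hgt hgpos hneg
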